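/- For the dressed metric G := uᵗ Σ u with u = blockdiag(1, e, 1) an invertible block matrix and g := eᵀηe, one has G = [[0,0,−1],[0,g,0],[−1,0,0]]. Moreover, for the transformations Z̄ = Z·Z̃ with Z = blockdiag(z,1,z⁻¹), Z̃ = blockdiag(1, z·1, 1), one has G^Z := (Z̃)² G satisfies C̄(z)^{−T} G^Z C̄(z)⁻¹ = G, where C̄(z) = u⁻¹ k₁(Υ) u Z̄ and k₁(Υ)ᵀ Σ k₁(Υ) = Σ. -/
import Mathlib


open Matrix

/-- Index type for the (n+2)-dimensional tractor representation: 1 ⊕ n ⊕ 1. -/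
abbrev Idx (n : ℕ) := Unit ⊕ Fin n ⊕ Unit

/-- The block matrix Σ = [[0,0,−1],[0,η,0],[−1,0,0]]. -/
noncomputable def SigmaM {n : ℕ} (η : Matrix (Fin n) (Fin n) ℝ) :
    Matrix (Idx n) (Idx n) ℝ :=
  Matrix.of fun i j =>
    match i, j with
    | Sum.inl _, Sum.inr (Sum.inr _) => -1
    | Sum.inr (Sum.inr _), Sum.inl _ => -1
    | Sum.inr (Sum.inl a), Sum.inr (Sum.inl b) => η a b
    | _, _ => 0

/-- Block diagonal matrix blockdiag(x, m, y). -/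
noncomputable def bdiag {n : ℕ} (x : ℝ) (m : Matrix (Fin n) (Fin n) ℝ) (y : ℝ) :
    Matrix (Idx n) (Idx n) ℝ :=
  Matrix.of fun i j =>
    match i, j with
    | Sum.inl _, Sum.inl _ => x
    | Sum.inr (Sum.inl a), Sum.inr (Sum.inl b) => m a b
    | Sum.inr (Sum.inr _), Sum.inr (Sum.inr _) => y
    | _, _ => 0

/-- The conformal boost matrix k₁(r) = [[1, r, ½ r rᵗ],[0, 1, rᵗ],[0,0,1]],
where `rᵗ = (r η⁻¹)ᵀ`. -/
noncomputable def k1M {n : ℕ} (η : Matrix (Fin n) (Fin n) ℝ) (r : Fin n → ℝ) :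
    Matrix (Idx n) (Idx n) ℝ :=
  Matrix.of fun i j =>
    match i, j with
    | Sum.inl _, Sum.inl _ => 1
    | Sum.inl _, Sum.inr (Sum.inl b) => r b
    | Sum.inl _, Sum.inr (Sum.inr _) => (1 / 2) * (r ⬝ᵥ (r ᵥ* η⁻¹))
    | Sum.inr (Sum.inl a), Sum.inr (Sum.inl b) => if a = b then (1 : ℝ) else 0
    | Sum.inr (Sum.inl a), Sum.inr (Sum.inr _) => (r ᵥ* η⁻¹) a
    | Sum.inr (Sum.inr _), Sum.inr (Sum.inr _) => 1
    | _, _ => 0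

/-- SB x M y : matrix with (1,3)=x, middle M, (3,1)=y. Note SigmaM η = SB (-1) η (-1). -/
noncomputable def SB {n : ℕ} (x : ℝ) (M : Matrix (Fin n) (Fin n) ℝ) (y : ℝ) :
    Matrix (Idx n) (Idx n) ℝ :=
  Matrix.of fun i j =>
    match i, j with
    | Sum.inl _, Sum.inr (Sum.inr _) => x
    | Sum.inr (Sum.inr _), Sum.inl _ => y
    | Sum.inr (Sum.inl a), Sum.inr (Sum.inl b) => M a b
    | _, _ => 0

lemma SigmaM_eq_SB {n : ℕ} (η : Matrix (Fin n) (Fin n) ℝ) : SigmaM η = SB (-1) η (-1) := by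
  ext i j
  rcases i with i | i | i <;> rcases j with j | j | j <;> rfl

lemma bdiag_mul {n : ℕ} (a c : ℝ) (m m' : Matrix (Fin n) (Fin n) ℝ) (b d : ℝ) :
    bdiag a m b * bdiag c m' d = bdiag (a*c) (m*m') (b*d) := by
  ext i j
  rcases i with i | i | i <;> rcases j with j | j | j <;>
    simp [bdiag, mul_apply, Fintype.sum_sum_type]

lemma bdiag_mul_SB {n : ℕ} (a : ℝ) (m : Matrix (Fin n) (Fin n) ℝ) (b x : ℝ)
    (M : Matrix (Fin n) (Fin n) ℝ) (y : ℝ) :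
    bdiag a m b * SB x M y = SB (a*x) (m*M) (b*y) := by
  ext i j
  rcases i with i | i | i <;> rcases j with j | j | j <;>
    simp [bdiag, SB, mul_apply, Fintype.sum_sum_type]

lemma SB_mul_bdiag {n : ℕ} (x : ℝ) (M : Matrix (Fin n) (Fin n) ℝ) (y c : ℝ)
    (m' : Matrix (Fin n) (Fin n) ℝ) (d : ℝ) :
    SB x M y * bdiag c m' d = SB (x*d) (M*m') (y*c) := by
  ext i j
  rcases i with i | i | i <;> rcases j with j | j | j <;>
    simp [bdiag, SB, mul_apply, Fintype.sum_sum_type]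

lemma bdiag_transpose {n : ℕ} (a : ℝ) (m : Matrix (Fin n) (Fin n) ℝ) (b : ℝ) :
    (bdiag a m b)ᵀ = bdiag a mᵀ b := by
  ext i j
  rcases i with i | i | i <;> rcases j with j | j | j <;> rfl

lemma bdiag_one {n : ℕ} : bdiag (n := n) 1 1 1 = 1 := by
  ext i j
  rcases i with i | i | i <;> rcases j with j | j | j <;>
    simp [bdiag, Matrix.one_apply]

lemma k1_mul_k1_neg {n : ℕ} (η : Matrix (Fin n) (Fin n) ℝ) (r : Fin n → ℝ) :
    k1M η r * k1M η (-r) = 1 := by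
  ext i j
  rcases i with i | i | i <;> rcases j with j | j | j <;>
    simp [k1M, mul_apply, Fintype.sum_sum_type, Matrix.one_apply, Matrix.neg_vecMul,
      dotProduct_neg, dotProduct, Finset.sum_ite_eq, Finset.sum_ite_eq',
      Pi.neg_apply, mul_neg, neg_neg] <;>
    ring

lemma bdiag_mul_assoc' {n : ℕ} (a c : ℝ) (m m' : Matrix (Fin n) (Fin n) ℝ) (b d : ℝ)
    (X : Matrix (Idx n) (Idx n) ℝ) :
    bdiag a m b * (bdiag c m' d * X) = bdiag (a*c) (m*m') (b*d) * X := by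
  rw [← mul_assoc, bdiag_mul]

lemma bdiag_mul_SB_assoc {n : ℕ} (a : ℝ) (m : Matrix (Fin n) (Fin n) ℝ) (b x : ℝ)
    (M : Matrix (Fin n) (Fin n) ℝ) (y : ℝ) (X : Matrix (Idx n) (Idx n) ℝ) :
    bdiag a m b * (SB x M y * X) = SB (a*x) (m*M) (b*y) * X := by
  rw [← mul_assoc, bdiag_mul_SB]

lemma SB_mul_bdiag_assoc {n : ℕ} (x : ℝ) (M : Matrix (Fin n) (Fin n) ℝ) (y c : ℝ)
    (m' : Matrix (Fin n) (Fin n) ℝ) (d : ℝ) (X : Matrix (Idx n) (Idx n) ℝ) :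
    SB x M y * (bdiag c m' d * X) = SB (x*d) (M*m') (y*c) * X := by
  rw [← mul_assoc, SB_mul_bdiag]


/-- For the dressed metric `G := uᵀΣu` with `u = blockdiag(1, e, 1)` and
`g := eᵀηe`, one has `G = [[0,0,−1],[0,g,0],[−1,0,0]]`. Moreover, with
`Z̃ = blockdiag(1, z·1, 1)`, `Z̄ = blockdiag(z, z·1, z⁻¹)`,
`C̄(z) = u⁻¹k₁(Υ)uZ̄` and `k₁(Υ)ᵀΣk₁(Υ) = Σ`, the rescaled metric
`G^Z = Z̃²G` satisfies `C̄(z)^{−T} G^Z C̄(z)⁻¹ = G`. -/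
theorem stmt14 {n : ℕ} (η : Matrix (Fin n) (Fin n) ℝ)
    (hηsym : ηᵀ = η) (hηinv : IsUnit η.det)
    (e : Matrix (Fin n) (Fin n) ℝ) (he : IsUnit e.det)
    (z : ℝ) (hz : 0 < z) (Υ : Fin n → ℝ)
    (hk1 : (k1M η Υ)ᵀ * SigmaM η * k1M η Υ = SigmaM η) :
    let u := bdiag (n := n) 1 e 1
    let G := uᵀ * SigmaM η * u
    let Ztilde := bdiag (n := n) 1 (z • (1 : Matrix (Fin n) (Fin n) ℝ)) 1
    let Zbar := bdiag (n := n) z (z • (1 : Matrix (Fin n) (Fin n) ℝ)) z⁻¹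
    let Cbar := u⁻¹ * k1M η Υ * u * Zbar
    G = SigmaM (eᵀ * η * e) ∧
      (Cbar⁻¹)ᵀ * ((Ztilde * Ztilde) * G) * Cbar⁻¹ = G := by
  intro u G Ztilde Zbar Cbar
  have hz0 : z ≠ 0 := ne_of_gt hz
  have he1 : e * e⁻¹ = 1 := Matrix.mul_nonsing_inv e he
  have he2 : e⁻¹ * e = 1 := Matrix.nonsing_inv_mul e he
  have hu : u * bdiag 1 e⁻¹ 1 = 1 := by
    rw [show u = bdiag (n := n) 1 e 1 from rfl, bdiag_mul, he1]
    simpa using bdiag_one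
  have hu2 : bdiag 1 e⁻¹ 1 * u = 1 := by
    rw [show u = bdiag (n := n) 1 e 1 from rfl, bdiag_mul, he2]
    simpa using bdiag_one
  have huinv : u⁻¹ = bdiag 1 e⁻¹ 1 := Matrix.inv_eq_right_inv hu
  set Zb' : Matrix (Idx n) (Idx n) ℝ := bdiag z⁻¹ (z⁻¹ • (1 : Matrix (Fin n) (Fin n) ℝ)) z
    with hZb'
  have hZ : Zbar * Zb' = 1 := by
    rw [show Zbar = bdiag (n := n) z (z • (1 : Matrix (Fin n) (Fin n) ℝ)) z⁻¹ from rfl,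
      hZb', bdiag_mul, smul_mul_smul_comm]
    simp [mul_inv_cancel₀ hz0, inv_mul_cancel₀ hz0]
    simpa using bdiag_one
  have hkk := k1_mul_k1_neg η Υ
  set k1' : Matrix (Idx n) (Idx n) ℝ := k1M η (-Υ) with hk1'def
  set Cinv : Matrix (Idx n) (Idx n) ℝ := Zb' * bdiag 1 e⁻¹ 1 * k1' * u with hCinvdef
  have hCbar : Cbar * Cinv = 1 := by
    rw [show Cbar = u⁻¹ * k1M η Υ * u * Zbar from rfl, huinv, hCinvdef]
    calc bdiag 1 e⁻¹ 1 * k1M η Υ * u * Zbar * (Zb' * bdiag 1 e⁻¹ 1 * k1' * u)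
        = bdiag 1 e⁻¹ 1 * (k1M η Υ * (u * ((Zbar * Zb') * (bdiag 1 e⁻¹ 1 * (k1' * u))))) := by
          simp only [mul_assoc]
      _ = bdiag 1 e⁻¹ 1 * (k1M η Υ * ((u * bdiag 1 e⁻¹ 1) * (k1' * u))) := by
          rw [hZ, one_mul, mul_assoc]
      _ = bdiag 1 e⁻¹ 1 * ((k1M η Υ * k1') * u) := by rw [hu, one_mul, mul_assoc]
      _ = 1 := by rw [hkk, one_mul, hu2]
  have hCinv : Cbar⁻¹ = Cinv := Matrix.inv_eq_right_inv hCbar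
  have hSk1' : k1'ᵀ * SigmaM η * k1' = SigmaM η := by
    calc k1'ᵀ * SigmaM η * k1'
        = k1'ᵀ * ((k1M η Υ)ᵀ * SigmaM η * k1M η Υ) * k1' := by rw [hk1]
      _ = (k1M η Υ * k1')ᵀ * SigmaM η * (k1M η Υ * k1') := by
          simp [transpose_mul, mul_assoc]
      _ = SigmaM η := by rw [hkk]; simp
  constructor
  · show uᵀ * SigmaM η * u = SigmaM (eᵀ * η * e)
    rw [show u = bdiag (n := n) 1 e 1 from rfl, bdiag_transpose, SigmaM_eq_SB,
      SigmaM_eq_SB, mul_assoc, SB_mul_bdiag, bdiag_mul_SB]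
    norm_num [mul_assoc]
  · rw [hCinv, hCinvdef]
    rw [show u = bdiag (n := n) 1 e 1 from rfl,
      show Ztilde = bdiag (n := n) 1 (z • (1 : Matrix (Fin n) (Fin n) ℝ)) 1 from rfl,
      show G = (bdiag (n := n) 1 e 1)ᵀ * SigmaM η * bdiag 1 e 1 from rfl, hZb']
    simp only [transpose_mul, bdiag_transpose, transpose_smul, transpose_one,
      SigmaM_eq_SB, mul_assoc, bdiag_mul_assoc', bdiag_mul_SB_assoc, SB_mul_bdiag_assoc,
      bdiag_mul, bdiag_mul_SB, SB_mul_bdiag]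
    have het' : ∀ X : Matrix (Fin n) (Fin n) ℝ, e⁻¹ᵀ * (eᵀ * X) = X := by
      intro X; rw [← mul_assoc, ← transpose_mul, he1, transpose_one, one_mul]
    have hmid : (e⁻¹ᵀ * (z⁻¹ • 1 * (z • 1 * (z • 1 * (eᵀ * (η * (e * ((z⁻¹ • (1 : Matrix (Fin n) (Fin n) ℝ)) * e⁻¹)))))))) = η := by
      simp only [smul_mul_assoc, mul_smul_comm, one_mul, mul_one, smul_smul, he1, het']
      rw [show z⁻¹ * z * z * z⁻¹ = 1 by field_simp, one_smul]
    have hS1 : z⁻¹ * (1 * (1 * (1 * (1 * (-1 * (1 * (z * 1))))))) = -1 := by field_simp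
    have hS2 : z * (1 * (1 * (1 * (1 * (-1 * (1 * (z⁻¹ * 1))))))) = -1 := by field_simp
    rw [hS1, hS2, hmid, ← SigmaM_eq_SB]
    have hS : ∀ X : Matrix (Idx n) (Idx n) ℝ,
        k1'ᵀ * (SigmaM η * (k1' * X)) = SigmaM η * X := by
      intro X; rw [← mul_assoc, ← mul_assoc, hSk1']
    rw [hS, SigmaM_eq_SB, SB_mul_bdiag, bdiag_mul_SB]
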